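/- arXiv:1407.7308 — 6 statements merged into one kernel-verified Lean document; each statement's English description precedes it below -/
import Mathlib

section
/- Let Z, D be {0,1}-valued random variables, Y a real-valued random variable, and U a random variable on a finite probability space. Assume (i) (Y(1), Y(0), U) is independent of Z, (ii) (Y(1), Y(0)) is conditionally independent of D given (Z, U), and Y = D·Y(1) + (1−D)·Y(0). Then E[D·g(Y) | Z=1] − E[D·g(Y) | Z=0] = E[g(Y(1))·w(U)] for any function g, where w(u) = P(D=1|Z=1,U=u) − P(D=1|Z=0,U=u). -/
open Finset
open scoped Classical

/-- Probability of an event `A` under mass function `p` on a finite sample space. -/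
noncomputable def prb {Ω : Type*} [Fintype Ω] (p : Ω → ℝ) (A : Ω → Prop) : ℝ :=
  ∑ ω, if A ω then p ω else 0

/-- Expectation of a real random variable `X` under mass function `p`. -/
noncomputable def exv {Ω : Type*} [Fintype Ω] (p : Ω → ℝ) (X : Ω → ℝ) : ℝ :=
  ∑ ω, p ω * X ω

/-- Conditional probability `P(A | B)`. -/
noncomputable def cpr {Ω : Type*} [Fintype Ω] (p : Ω → ℝ) (A B : Ω → Prop) : ℝ :=
  prb p (fun ω => A ω ∧ B ω) / prb p B

/-- Conditional expectation `E[X | B]`. -/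
noncomputable def cex {Ω : Type*} [Fintype Ω] (p : Ω → ℝ) (X : Ω → ℝ) (B : Ω → Prop) : ℝ :=
  (∑ ω, if B ω then p ω * X ω else 0) / prb p B

lemma prb_congr {Ω : Type*} [Fintype Ω] (p : Ω → ℝ) {A B : Ω → Prop}
    (h : ∀ ω, A ω ↔ B ω) : prb p A = prb p B := by
  unfold prb
  exact Finset.sum_congr rfl fun ω _ => by simp [h ω]

lemma prb_mono {Ω : Type*} [Fintype Ω] (p : Ω → ℝ) (hp : ∀ ω, 0 ≤ p ω)
    {A B : Ω → Prop} (h : ∀ ω, A ω → B ω) : prb p A ≤ prb p B := by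
  unfold prb
  apply Finset.sum_le_sum
  intro ω _
  by_cases hA : A ω
  · simp [hA, h ω hA]
  · simp only [hA, if_false]
    split_ifs
    · exact hp ω
    · exact le_refl 0

/-- E[D·g(Y)|Z=1] − E[D·g(Y)|Z=0] = E[g(Y(1))·w(U)]. -/
theorem stmt1 {Ω ι : Type*} [Fintype Ω] [Fintype ι]
    (p : Ω → ℝ) (hp : ∀ ω, 0 ≤ p ω) (hpsum : ∑ ω, p ω = 1)
    (Z D Y Y1 Y0 : Ω → ℝ) (U : Ω → ι)
    (hZbin : ∀ ω, Z ω = 0 ∨ Z ω = 1) (hDbin : ∀ ω, D ω = 0 ∨ D ω = 1)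
    (hYobs : ∀ ω, Y ω = D ω * Y1 ω + (1 - D ω) * Y0 ω)
    (hpos : ∀ (z : ℝ) (u : ι), (z = 0 ∨ z = 1) →
      0 < prb p (fun ω => Z ω = z ∧ U ω = u))
    (hindep : ∀ (y1 y0 : ℝ) (u : ι) (z : ℝ),
      prb p (fun ω => Y1 ω = y1 ∧ Y0 ω = y0 ∧ U ω = u ∧ Z ω = z) =
        prb p (fun ω => Y1 ω = y1 ∧ Y0 ω = y0 ∧ U ω = u) * prb p (fun ω => Z ω = z))
    (hcind : ∀ (y1 y0 d z : ℝ) (u : ι),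
      cpr p (fun ω => Y1 ω = y1 ∧ Y0 ω = y0 ∧ D ω = d) (fun ω => Z ω = z ∧ U ω = u) =
        cpr p (fun ω => Y1 ω = y1 ∧ Y0 ω = y0) (fun ω => Z ω = z ∧ U ω = u) *
          cpr p (fun ω => D ω = d) (fun ω => Z ω = z ∧ U ω = u))
    (w : ι → ℝ)
    (hw : ∀ u, w u = cpr p (fun ω => D ω = 1) (fun ω => Z ω = 1 ∧ U ω = u) -
                    cpr p (fun ω => D ω = 1) (fun ω => Z ω = 0 ∧ U ω = u))
    (g : ℝ → ℝ) :
    cex p (fun ω => D ω * g (Y ω)) (fun ω => Z ω = 1) -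
      cex p (fun ω => D ω * g (Y ω)) (fun ω => Z ω = 0) =
    exv p (fun ω => g (Y1 ω) * w (U ω)) := by
  classical
  -- Ω is nonempty
  have hne : Nonempty Ω := by
    by_contra h
    rw [not_nonempty_iff] at h
    rw [Finset.univ_eq_empty, Finset.sum_empty] at hpsum
    norm_num at hpsum
  obtain ⟨ω₀⟩ := hne
  -- P(Z=z) > 0 for z ∈ {0,1}
  have hPz : ∀ z : ℝ, (z = 0 ∨ z = 1) → 0 < prb p (fun ω => Z ω = z) := by
    intro z hz
    exact lt_of_lt_of_le (hpos z (U ω₀) hz) (prb_mono p hp fun ω h => h.1)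
  set φ : Ω → ℝ × ℝ × ι := fun ω => (Y1 ω, Y0 ω, U ω) with hφ
  set s : Finset (ℝ × ℝ × ι) := Finset.univ.image φ with hs
  have hmem : ∀ ω : Ω, φ ω ∈ s := fun ω => Finset.mem_image_of_mem φ (Finset.mem_univ ω)
  have hiff : ∀ (t : ℝ × ℝ × ι) (ω : Ω),
      φ ω = t ↔ (Y1 ω = t.1 ∧ Y0 ω = t.2.1 ∧ U ω = t.2.2) := by
    intro t ω
    simp [hφ, Prod.ext_iff, and_assoc]
  -- the key factorization
  have key : ∀ z : ℝ, (z = 0 ∨ z = 1) → ∀ (y1 y0 : ℝ) (u : ι),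
      prb p (fun ω => Y1 ω = y1 ∧ Y0 ω = y0 ∧ D ω = 1 ∧ Z ω = z ∧ U ω = u) =
        prb p (fun ω => Y1 ω = y1 ∧ Y0 ω = y0 ∧ U ω = u) * prb p (fun ω => Z ω = z) *
          cpr p (fun ω => D ω = 1) (fun ω => Z ω = z ∧ U ω = u) := by
    intro z hz y1 y0 u
    have hB := hpos z u hz
    have hBne : prb p (fun ω => Z ω = z ∧ U ω = u) ≠ 0 := ne_of_gt hB
    have h := hcind y1 y0 1 z u
    unfold cpr at h ⊢
    have e1 : prb p (fun ω => Y1 ω = y1 ∧ Y0 ω = y0 ∧ D ω = 1 ∧ Z ω = z ∧ U ω = u) =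
        prb p (fun ω => (Y1 ω = y1 ∧ Y0 ω = y0 ∧ D ω = 1) ∧ (Z ω = z ∧ U ω = u)) :=
      prb_congr p fun ω => by tauto
    have e2 : prb p (fun ω => (Y1 ω = y1 ∧ Y0 ω = y0) ∧ (Z ω = z ∧ U ω = u)) =
        prb p (fun ω => Y1 ω = y1 ∧ Y0 ω = y0 ∧ U ω = u ∧ Z ω = z) :=
      prb_congr p fun ω => by tauto
    rw [div_eq_iff hBne] at h
    rw [e1, h, e2, hindep y1 y0 u z]
    field_simp
  -- the conditional expectation at each z
  have hcex : ∀ z : ℝ, (z = 0 ∨ z = 1) →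
      cex p (fun ω => D ω * g (Y ω)) (fun ω => Z ω = z) =
        ∑ t ∈ s, g t.1 * prb p (fun ω => Y1 ω = t.1 ∧ Y0 ω = t.2.1 ∧ U ω = t.2.2) *
          cpr p (fun ω => D ω = 1) (fun ω => Z ω = z ∧ U ω = t.2.2) := by
    intro z hz
    unfold cex
    rw [div_eq_iff (ne_of_gt (hPz z hz))]
    have hpt : ∀ ω : Ω, (if Z ω = z then p ω * (D ω * g (Y ω)) else 0) =
        (if D ω = 1 ∧ Z ω = z then p ω * g (Y1 ω) else 0) := by
      intro ω
      rcases hDbin ω with hD | hD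
      · simp [hD]
      · have hY : Y ω = Y1 ω := by rw [hYobs ω, hD]; ring
        simp [hD, hY]
    have inner : ∀ t : ℝ × ℝ × ι,
        ∑ ω ∈ Finset.univ.filter (fun ω => φ ω = t),
          (if D ω = 1 ∧ Z ω = z then p ω * g (Y1 ω) else 0) =
        g t.1 * prb p (fun ω => Y1 ω = t.1 ∧ Y0 ω = t.2.1 ∧ D ω = 1 ∧ Z ω = z ∧
          U ω = t.2.2) := by
      intro t
      rw [Finset.sum_filter]
      unfold prb
      rw [Finset.mul_sum]
      apply Finset.sum_congr rfl
      intro ω _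
      rcases Classical.em (Y1 ω = t.1 ∧ Y0 ω = t.2.1 ∧ U ω = t.2.2) with hf | hf
      · have hφt : φ ω = t := (hiff t ω).mpr hf
        rcases Classical.em (D ω = 1 ∧ Z ω = z) with hd | hd
        · rw [if_pos hφt, if_pos hd, if_pos ⟨hf.1, hf.2.1, hd.1, hd.2, hf.2.2⟩, hf.1]
          ring
        · rw [if_pos hφt, if_neg hd, if_neg (fun hE => hd ⟨hE.2.2.1, hE.2.2.2.1⟩)]
          ring
      · rw [if_neg (fun h => hf ((hiff t ω).mp h)),
          if_neg (fun hE => hf ⟨hE.1, hE.2.1, hE.2.2.2.2⟩)]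
        ring
    calc ∑ ω, (if Z ω = z then p ω * (D ω * g (Y ω)) else 0)
        = ∑ ω, (if D ω = 1 ∧ Z ω = z then p ω * g (Y1 ω) else 0) :=
          Finset.sum_congr rfl fun ω _ => hpt ω
      _ = ∑ t ∈ s, ∑ ω ∈ Finset.univ.filter (fun ω => φ ω = t),
            (if D ω = 1 ∧ Z ω = z then p ω * g (Y1 ω) else 0) :=
          (Finset.sum_fiberwise_of_maps_to (fun ω _ => hmem ω) _).symm
      _ = ∑ t ∈ s, g t.1 * prb p (fun ω => Y1 ω = t.1 ∧ Y0 ω = t.2.1 ∧ D ω = 1 ∧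
            Z ω = z ∧ U ω = t.2.2) := Finset.sum_congr rfl fun t _ => inner t
      _ = ∑ t ∈ s, g t.1 * (prb p (fun ω => Y1 ω = t.1 ∧ Y0 ω = t.2.1 ∧ U ω = t.2.2) *
            prb p (fun ω => Z ω = z) *
            cpr p (fun ω => D ω = 1) (fun ω => Z ω = z ∧ U ω = t.2.2)) :=
          Finset.sum_congr rfl fun t _ => by rw [key z hz t.1 t.2.1 t.2.2]
      _ = (∑ t ∈ s, g t.1 * prb p (fun ω => Y1 ω = t.1 ∧ Y0 ω = t.2.1 ∧ U ω = t.2.2) *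
            cpr p (fun ω => D ω = 1) (fun ω => Z ω = z ∧ U ω = t.2.2)) *
            prb p (fun ω => Z ω = z) := by
          rw [Finset.sum_mul]
          exact Finset.sum_congr rfl fun t _ => by ring
  rw [hcex 1 (Or.inr rfl), hcex 0 (Or.inl rfl), ← Finset.sum_sub_distrib]
  unfold exv
  rw [← Finset.sum_fiberwise_of_maps_to (fun ω (_ : ω ∈ Finset.univ) => hmem ω)
    (fun ω => p ω * (g (Y1 ω) * w (U ω)))]
  apply Finset.sum_congr rfl
  intro t _
  have hAeq : ∑ ω ∈ Finset.univ.filter (fun ω => φ ω = t),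
      p ω * (g (Y1 ω) * w (U ω)) =
      prb p (fun ω => Y1 ω = t.1 ∧ Y0 ω = t.2.1 ∧ U ω = t.2.2) * (g t.1 * w t.2.2) := by
    rw [Finset.sum_filter]
    unfold prb
    rw [Finset.sum_mul]
    apply Finset.sum_congr rfl
    intro ω _
    rcases Classical.em (Y1 ω = t.1 ∧ Y0 ω = t.2.1 ∧ U ω = t.2.2) with hf | hf
    · rw [if_pos ((hiff t ω).mpr hf), if_pos hf, hf.1, hf.2.2]
    · rw [if_neg (fun h => hf ((hiff t ω).mp h)), if_neg hf]
      ring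
  rw [hAeq, hw t.2.2]
  ring
end

section
/- Define κ = (Z − p)/(p(1−p)) where p = P(Z=1) ∈ (0,1). Under the stochastic compliance class IV assumptions ((Y(1),Y(0),U) independent of Z; (Y(1),Y(0)) conditionally independent of D given (Z,U); Y = D·Y(1)+(1−D)·Y(0)), one has E[κ·D·g(Y)] = E[g(Y(1))·w(U)] and E[κ·D] = E[w(U)], so that if E[w(U)] ≠ 0 then E[κ·D·g(Y)]/E[κ·D] = E[g(Y(1))·w(U)]/E[w(U)]. -/
open Finset
open scoped Classical

lemma sum_image_ite {Ω : Type*} [Fintype Ω] (X : Ω → ℝ) (ω : Ω) (r : ℝ) (C : Prop) :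
    ∑ x ∈ Finset.image X Finset.univ, (if X ω = x ∧ C then r else 0) = if C then r else 0 := by
  classical
  simp only [ite_and]
  rw [Finset.sum_ite_eq]
  simp [Finset.mem_image_of_mem X (Finset.mem_univ ω)]

lemma sum_prb {Ω : Type*} [Fintype Ω] (p : Ω → ℝ) (X : Ω → ℝ) (C : Ω → Prop) :
    ∑ x ∈ Finset.image X Finset.univ, prb p (fun ω => X ω = x ∧ C ω) = prb p C := by
  classical
  unfold prb
  rw [Finset.sum_comm]
  refine Finset.sum_congr rfl fun ω _ => ?_
  convert sum_image_ite X ω (p ω) (C ω) using 2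
  congr

lemma sum_fiber {Ω ι : Type*} [Fintype Ω] [Fintype ι] (X : Ω → ℝ) (U : Ω → ι) (f : Ω → ℝ) :
    ∑ x ∈ Finset.image X Finset.univ, ∑ u : ι, ∑ ω, (if X ω = x ∧ U ω = u then f ω else 0)
      = ∑ ω, f ω := by
  classical
  have h1 : ∀ x : ℝ, ∑ u : ι, ∑ ω, (if X ω = x ∧ U ω = u then f ω else 0)
      = ∑ ω, ∑ u : ι, (if X ω = x ∧ U ω = u then f ω else 0) := fun x => Finset.sum_comm
  simp only [h1]
  rw [Finset.sum_comm]
  refine Finset.sum_congr rfl fun ω _ => ?_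
  rw [Finset.sum_comm]
  have h2 : ∀ u : ι, ∑ x ∈ Finset.image X Finset.univ, (if X ω = x ∧ U ω = u then f ω else 0)
      = if U ω = u then f ω else 0 := fun u => sum_image_ite X ω (f ω) (U ω = u)
  rw [Finset.sum_congr rfl fun u _ => h2 u]
  rw [Finset.sum_ite_eq]
  simp

/-- weighting identification with κ = (Z − p)/(p(1−p)). -/
theorem stmt5 {Ω ι : Type*} [Fintype Ω] [Fintype ι]
    (p : Ω → ℝ) (hp : ∀ ω, 0 ≤ p ω) (hpsum : ∑ ω, p ω = 1)
    (Z D Y Y1 Y0 : Ω → ℝ) (U : Ω → ι)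
    (hZbin : ∀ ω, Z ω = 0 ∨ Z ω = 1) (hDbin : ∀ ω, D ω = 0 ∨ D ω = 1)
    (hYobs : ∀ ω, Y ω = D ω * Y1 ω + (1 - D ω) * Y0 ω)
    (hpos : ∀ (z : ℝ) (u : ι), (z = 0 ∨ z = 1) →
      0 < prb p (fun ω => Z ω = z ∧ U ω = u))
    (hindep : ∀ (y1 y0 : ℝ) (u : ι) (z : ℝ),
      prb p (fun ω => Y1 ω = y1 ∧ Y0 ω = y0 ∧ U ω = u ∧ Z ω = z) =
        prb p (fun ω => Y1 ω = y1 ∧ Y0 ω = y0 ∧ U ω = u) * prb p (fun ω => Z ω = z))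
    (hcind : ∀ (y1 y0 d z : ℝ) (u : ι),
      cpr p (fun ω => Y1 ω = y1 ∧ Y0 ω = y0 ∧ D ω = d) (fun ω => Z ω = z ∧ U ω = u) =
        cpr p (fun ω => Y1 ω = y1 ∧ Y0 ω = y0) (fun ω => Z ω = z ∧ U ω = u) *
          cpr p (fun ω => D ω = d) (fun ω => Z ω = z ∧ U ω = u))
    (w : ι → ℝ)
    (hw : ∀ u, w u = cpr p (fun ω => D ω = 1) (fun ω => Z ω = 1 ∧ U ω = u) -
                    cpr p (fun ω => D ω = 1) (fun ω => Z ω = 0 ∧ U ω = u))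
    (pZ : ℝ) (hpZ : pZ = prb p (fun ω => Z ω = 1)) (hpZ0 : 0 < pZ) (hpZ1 : pZ < 1)
    (κ : Ω → ℝ) (hκ : ∀ ω, κ ω = (Z ω - pZ) / (pZ * (1 - pZ)))
    (g : ℝ → ℝ) :
    exv p (fun ω => κ ω * D ω * g (Y ω)) = exv p (fun ω => g (Y1 ω) * w (U ω)) ∧
    exv p (fun ω => κ ω * D ω) = exv p (fun ω => w (U ω)) ∧
    (exv p (fun ω => w (U ω)) ≠ 0 →
      exv p (fun ω => κ ω * D ω * g (Y ω)) / exv p (fun ω => κ ω * D ω) =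
        exv p (fun ω => g (Y1 ω) * w (U ω)) / exv p (fun ω => w (U ω))) := by
  
  classical
  have hpZne : pZ ≠ 0 := ne_of_gt hpZ0
  have h1pZpos : (0:ℝ) < 1 - pZ := by linarith
  have h1pZ : (1:ℝ) - pZ ≠ 0 := ne_of_gt h1pZpos
  have hZ0 : prb p (fun ω => Z ω = 0) = 1 - pZ := by
    have hsum : prb p (fun ω => Z ω = 1) + prb p (fun ω => Z ω = 0) = 1 := by
      unfold prb
      rw [← Finset.sum_add_distrib,
        Finset.sum_congr rfl (fun ω _ => show
          ((if Z ω = 1 then p ω else 0) + (if Z ω = 0 then p ω else 0)) = p ω by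
            rcases hZbin ω with h | h <;> simp [h])]
      exact hpsum
    rw [hpZ]; linarith
  -- multiplied-out form of cpr
  have cpr_mul : ∀ (A B : Ω → Prop), prb p B ≠ 0 →
      prb p (fun ω => A ω ∧ B ω) = cpr p A B * prb p B := by
    intro A B hB
    unfold cpr
    field_simp
  -- step 1 : conditional independence, multiplied out
  have h1 : ∀ (y1 y0 z : ℝ) (u : ι), (z = 0 ∨ z = 1) →
      prb p (fun ω => (Y1 ω = y1 ∧ Y0 ω = y0 ∧ D ω = 1) ∧ (Z ω = z ∧ U ω = u)) =
      prb p (fun ω => (Y1 ω = y1 ∧ Y0 ω = y0) ∧ (Z ω = z ∧ U ω = u)) *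
        cpr p (fun ω => D ω = 1) (fun ω => Z ω = z ∧ U ω = u) := by
    intro y1 y0 z u hz
    have hB : prb p (fun ω => Z ω = z ∧ U ω = u) ≠ 0 := ne_of_gt (hpos z u hz)
    have hc := hcind y1 y0 1 z u
    rw [cpr_mul _ _ hB, cpr_mul _ _ hB, hc]
    ring
  -- step 2 : sum over y0
  have h2 : ∀ (y1 z : ℝ) (u : ι), (z = 0 ∨ z = 1) →
      prb p (fun ω => Y1 ω = y1 ∧ D ω = 1 ∧ Z ω = z ∧ U ω = u) =
      prb p (fun ω => Y1 ω = y1 ∧ Z ω = z ∧ U ω = u) *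
        cpr p (fun ω => D ω = 1) (fun ω => Z ω = z ∧ U ω = u) := by
    intro y1 z u hz
    calc prb p (fun ω => Y1 ω = y1 ∧ D ω = 1 ∧ Z ω = z ∧ U ω = u)
        = ∑ y0 ∈ Finset.image Y0 Finset.univ,
            prb p (fun ω => Y0 ω = y0 ∧ (Y1 ω = y1 ∧ D ω = 1 ∧ Z ω = z ∧ U ω = u)) :=
          (sum_prb p Y0 _).symm
      _ = ∑ y0 ∈ Finset.image Y0 Finset.univ,
            prb p (fun ω => (Y1 ω = y1 ∧ Y0 ω = y0 ∧ D ω = 1) ∧ (Z ω = z ∧ U ω = u)) :=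
          Finset.sum_congr rfl fun y0 _ => prb_congr p (fun ω => by tauto)
      _ = ∑ y0 ∈ Finset.image Y0 Finset.univ,
            prb p (fun ω => (Y1 ω = y1 ∧ Y0 ω = y0) ∧ (Z ω = z ∧ U ω = u)) *
              cpr p (fun ω => D ω = 1) (fun ω => Z ω = z ∧ U ω = u) :=
          Finset.sum_congr rfl fun y0 _ => h1 y1 y0 z u hz
      _ = ∑ y0 ∈ Finset.image Y0 Finset.univ,
            prb p (fun ω => Y0 ω = y0 ∧ (Y1 ω = y1 ∧ Z ω = z ∧ U ω = u)) *
              cpr p (fun ω => D ω = 1) (fun ω => Z ω = z ∧ U ω = u) :=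
          Finset.sum_congr rfl fun y0 _ => by
            rw [prb_congr p (show ∀ ω, ((Y1 ω = y1 ∧ Y0 ω = y0) ∧ (Z ω = z ∧ U ω = u)) ↔
              (Y0 ω = y0 ∧ (Y1 ω = y1 ∧ Z ω = z ∧ U ω = u)) from fun ω => by tauto)]
      _ = (∑ y0 ∈ Finset.image Y0 Finset.univ,
            prb p (fun ω => Y0 ω = y0 ∧ (Y1 ω = y1 ∧ Z ω = z ∧ U ω = u))) *
              cpr p (fun ω => D ω = 1) (fun ω => Z ω = z ∧ U ω = u) :=
          (Finset.sum_mul _ _ _).symm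
      _ = prb p (fun ω => Y1 ω = y1 ∧ Z ω = z ∧ U ω = u) *
              cpr p (fun ω => D ω = 1) (fun ω => Z ω = z ∧ U ω = u) := by
          rw [sum_prb]
  -- step 3 : independence summed over y0
  have h3 : ∀ (y1 z : ℝ) (u : ι),
      prb p (fun ω => Y1 ω = y1 ∧ U ω = u ∧ Z ω = z) =
      prb p (fun ω => Y1 ω = y1 ∧ U ω = u) * prb p (fun ω => Z ω = z) := by
    intro y1 z u
    calc prb p (fun ω => Y1 ω = y1 ∧ U ω = u ∧ Z ω = z)
        = ∑ y0 ∈ Finset.image Y0 Finset.univ,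
            prb p (fun ω => Y0 ω = y0 ∧ (Y1 ω = y1 ∧ U ω = u ∧ Z ω = z)) :=
          (sum_prb p Y0 _).symm
      _ = ∑ y0 ∈ Finset.image Y0 Finset.univ,
            prb p (fun ω => Y1 ω = y1 ∧ Y0 ω = y0 ∧ U ω = u ∧ Z ω = z) :=
          Finset.sum_congr rfl fun y0 _ => prb_congr p (fun ω => by tauto)
      _ = ∑ y0 ∈ Finset.image Y0 Finset.univ,
            prb p (fun ω => Y1 ω = y1 ∧ Y0 ω = y0 ∧ U ω = u) * prb p (fun ω => Z ω = z) :=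
          Finset.sum_congr rfl fun y0 _ => hindep y1 y0 u z
      _ = ∑ y0 ∈ Finset.image Y0 Finset.univ,
            prb p (fun ω => Y0 ω = y0 ∧ (Y1 ω = y1 ∧ U ω = u)) * prb p (fun ω => Z ω = z) :=
          Finset.sum_congr rfl fun y0 _ => by
            rw [prb_congr p (show ∀ ω, (Y1 ω = y1 ∧ Y0 ω = y0 ∧ U ω = u) ↔
              (Y0 ω = y0 ∧ (Y1 ω = y1 ∧ U ω = u)) from fun ω => by tauto)]
      _ = (∑ y0 ∈ Finset.image Y0 Finset.univ,
            prb p (fun ω => Y0 ω = y0 ∧ (Y1 ω = y1 ∧ U ω = u))) * prb p (fun ω => Z ω = z) :=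
          (Finset.sum_mul _ _ _).symm
      _ = prb p (fun ω => Y1 ω = y1 ∧ U ω = u) * prb p (fun ω => Z ω = z) := by
          rw [sum_prb]
  -- key factorization
  have hkey : ∀ (y1 z : ℝ) (u : ι), (z = 0 ∨ z = 1) →
      prb p (fun ω => Y1 ω = y1 ∧ D ω = 1 ∧ Z ω = z ∧ U ω = u) =
      prb p (fun ω => Y1 ω = y1 ∧ U ω = u) * prb p (fun ω => Z ω = z) *
        cpr p (fun ω => D ω = 1) (fun ω => Z ω = z ∧ U ω = u) := by
    intro y1 z u hz
    rw [h2 y1 z u hz,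
      prb_congr p (show ∀ ω, (Y1 ω = y1 ∧ Z ω = z ∧ U ω = u) ↔
        (Y1 ω = y1 ∧ U ω = u ∧ Z ω = z) from fun ω => by tauto),
      h3 y1 z u]
  -- main identity for an arbitrary function G
  have main : ∀ G : ℝ → ℝ,
      exv p (fun ω => κ ω * D ω * G (Y ω)) = exv p (fun ω => G (Y1 ω) * w (U ω)) := by
    intro G
    have hpt : ∀ ω, p ω * (κ ω * D ω * G (Y ω)) =
        (if Z ω = 1 ∧ D ω = 1 then p ω * G (Y1 ω) else 0) / pZ -
        (if Z ω = 0 ∧ D ω = 1 then p ω * G (Y1 ω) else 0) / (1 - pZ) := by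
      intro ω
      rcases hZbin ω with hZω | hZω <;> rcases hDbin ω with hDω | hDω <;>
        simp [hκ ω, hYobs ω, hZω, hDω] <;> field_simp <;> ring
    have hS : ∀ z : ℝ, (z = 0 ∨ z = 1) →
        (∑ ω, if Z ω = z ∧ D ω = 1 then p ω * G (Y1 ω) else 0) =
        ∑ y1 ∈ Finset.image Y1 Finset.univ, ∑ u : ι,
          G y1 * (prb p (fun ω => Y1 ω = y1 ∧ U ω = u) * prb p (fun ω => Z ω = z) *
            cpr p (fun ω => D ω = 1) (fun ω => Z ω = z ∧ U ω = u)) := by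
      intro z hz
      rw [← sum_fiber Y1 U (fun ω => if Z ω = z ∧ D ω = 1 then p ω * G (Y1 ω) else 0)]
      refine Finset.sum_congr rfl fun y1 _ => Finset.sum_congr rfl fun u _ => ?_
      rw [← hkey y1 z u hz]
      unfold prb
      rw [Finset.mul_sum]
      refine Finset.sum_congr rfl fun ω _ => ?_
      by_cases ha : Y1 ω = y1 ∧ U ω = u
      · by_cases hb : Z ω = z ∧ D ω = 1
        · rw [if_pos ha, if_pos hb, if_pos ⟨ha.1, hb.2, hb.1, ha.2⟩, ha.1]
          ring
        · rw [if_pos ha, if_neg hb, if_neg (by tauto), mul_zero]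
      · rw [if_neg ha, if_neg (by tauto), mul_zero]
    have hR : exv p (fun ω => G (Y1 ω) * w (U ω)) =
        ∑ y1 ∈ Finset.image Y1 Finset.univ, ∑ u : ι,
          G y1 * w u * prb p (fun ω => Y1 ω = y1 ∧ U ω = u) := by
      unfold exv
      rw [← sum_fiber Y1 U (fun ω => p ω * (G (Y1 ω) * w (U ω)))]
      refine Finset.sum_congr rfl fun y1 _ => Finset.sum_congr rfl fun u _ => ?_
      unfold prb
      rw [Finset.mul_sum]
      refine Finset.sum_congr rfl fun ω _ => ?_
      by_cases ha : Y1 ω = y1 ∧ U ω = u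
      · rw [if_pos ha, if_pos ha, ha.1, ha.2]
        ring
      · rw [if_neg ha, if_neg ha, mul_zero]
    calc exv p (fun ω => κ ω * D ω * G (Y ω))
        = ∑ ω, ((if Z ω = 1 ∧ D ω = 1 then p ω * G (Y1 ω) else 0) / pZ -
                (if Z ω = 0 ∧ D ω = 1 then p ω * G (Y1 ω) else 0) / (1 - pZ)) := by
          unfold exv
          exact Finset.sum_congr rfl fun ω _ => hpt ω
      _ = (∑ ω, if Z ω = 1 ∧ D ω = 1 then p ω * G (Y1 ω) else 0) / pZ -
          (∑ ω, if Z ω = 0 ∧ D ω = 1 then p ω * G (Y1 ω) else 0) / (1 - pZ) := by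
          rw [Finset.sum_sub_distrib, Finset.sum_div, Finset.sum_div]
      _ = exv p (fun ω => G (Y1 ω) * w (U ω)) := by
          rw [hS 1 (Or.inr rfl), hS 0 (Or.inl rfl), hR, ← hpZ, hZ0,
            Finset.sum_div, Finset.sum_div, ← Finset.sum_sub_distrib]
          refine Finset.sum_congr rfl fun y1 _ => ?_
          rw [Finset.sum_div, Finset.sum_div, ← Finset.sum_sub_distrib]
          refine Finset.sum_congr rfl fun u _ => ?_
          rw [hw u]
          field_simp
  have hmain1 := main g
  have hmain2 : exv p (fun ω => κ ω * D ω) = exv p (fun ω => w (U ω)) := by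
    have h := main (fun _ => (1:ℝ))
    simpa using h
  exact ⟨hmain1, hmain2, fun hne => by rw [hmain1, hmain2]⟩
end

section
/- Suppose τ(u) = E[Y(1)−Y(0)|U=u] satisfies max_u τ(u) − min_u τ(u) ≤ r, stochastic monotonicity holds (w(u) ≥ 0 for all u), E[w(U)] > 0, and let Q-weighted ATE be τ_Q = E[τ(U)w(U)]/E[w(U)]. Then the global average treatment effect τ = E[τ(U)] satisfies τ_Q − r(1 − E[w(U)]) ≤ τ ≤ τ_Q + r(1 − E[w(U)]). -/
open Finset
open scoped Classical

/-- bounds on the global ATE from the Q-weighted ATE under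
stochastic monotonicity, when effect heterogeneity across strata is at most r. -/
theorem stmt7 {ι : Type*} [Fintype ι]
    (q w τ : ι → ℝ)
    (hq : ∀ u, 0 < q u) (hqsum : ∑ u, q u = 1)
    (hwb : ∀ u, 0 ≤ w u ∧ w u ≤ 1)
    (r : ℝ) (hr : 0 ≤ r)
    (hrange : ∀ u u', τ u - τ u' ≤ r)
    (hEw : 0 < ∑ u, w u * q u) :
    (∑ u, τ u * w u * q u) / (∑ u, w u * q u) - r * (1 - ∑ u, w u * q u) ≤
        ∑ u, τ u * q u ∧
      (∑ u, τ u * q u) ≤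
        (∑ u, τ u * w u * q u) / (∑ u, w u * q u) + r * (1 - ∑ u, w u * q u) := by
  set W := ∑ u, w u * q u with hW
  set S := ∑ u, τ u * w u * q u with hS
  set T := ∑ u, τ u * q u with hT
  have hV : ∑ u, (1 - w u) * q u = 1 - W := by
    have h : ∑ u, (1 - w u) * q u = (∑ u, q u) - ∑ u, w u * q u := by
      rw [← Finset.sum_sub_distrib]
      apply Finset.sum_congr rfl; intros; ring
    rw [h, hqsum]
  have hA : ∑ u, τ u * (1 - w u) * q u = T - S := by
    rw [hT, hS, ← Finset.sum_sub_distrib]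
    apply Finset.sum_congr rfl; intros; ring
  -- key double-sum identity
  have key : T * W - S = ∑ u, ∑ v, (τ u - τ v) * ((1 - w u) * q u * (w v * q v)) := by
    have h1 : (T - S) * W = ∑ u, ∑ v, (τ u * (1 - w u) * q u) * (w v * q v) := by
      rw [← hA, Finset.sum_mul_sum]
    have h2 : S * (1 - W) = ∑ u, ∑ v, ((1 - w u) * q u) * (τ v * w v * q v) := by
      rw [← hV, mul_comm, Finset.sum_mul_sum]
    have : T * W - S = (T - S) * W - S * (1 - W) := by ring
    rw [this, h1, h2, ← Finset.sum_sub_distrib]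
    apply Finset.sum_congr rfl; intro u _
    rw [← Finset.sum_sub_distrib]
    apply Finset.sum_congr rfl; intro v _; ring
  have hterm : ∀ u v : ι, 0 ≤ (1 - w u) * q u * (w v * q v) := by
    intro u v
    have h1 := (hwb u).2; have h2 := (hwb v).1
    have h3 := (hq u).le; have h4 := (hq v).le
    have h5 : 0 ≤ 1 - w u := by linarith
    exact mul_nonneg (mul_nonneg h5 h3) (mul_nonneg h2 h4)
  have hconst : r * ((1 - W) * W) = ∑ u, ∑ v, r * ((1 - w u) * q u * (w v * q v)) := by
    have : (∑ u, (1 - w u) * q u) * W = ∑ u, ∑ v, ((1 - w u) * q u) * (w v * q v) := by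
      rw [Finset.sum_mul_sum]
    rw [hV] at this
    rw [this]
    simp only [Finset.mul_sum]
  have hub : T * W - S ≤ r * ((1 - W) * W) := by
    rw [key, hconst]
    apply Finset.sum_le_sum; intro u _
    apply Finset.sum_le_sum; intro v _
    exact mul_le_mul_of_nonneg_right (hrange u v) (hterm u v)
  have hlb : -(r * ((1 - W) * W)) ≤ T * W - S := by
    rw [key, hconst, ← Finset.sum_neg_distrib]
    apply Finset.sum_le_sum; intro u _
    rw [← Finset.sum_neg_distrib]
    apply Finset.sum_le_sum; intro v _
    have h1 : -(τ u - τ v) ≤ r := by have := hrange v u; linarith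
    nlinarith [hterm u v, mul_le_mul_of_nonneg_right h1 (hterm u v)]
  have hWne : W ≠ 0 := ne_of_gt hEw
  have hdiv : S / W * W = S := div_mul_cancel₀ S hWne
  constructor
  · nlinarith [hEw, hdiv, hlb]
  · nlinarith [hEw, hdiv, hub]
end

section
/- In the deterministic compliance class framework (Z binary, D = Z·D(1)+(1−Z)·D(0), Y = D·Y(1)+(1−D)·Y(0)), if (Y(0), Y(1), D(0), D(1)) is independent of Z, D(1) ≥ D(0) almost surely, and P(D=1|Z=1) > P(D=1|Z=0), then P(D(0)=0, D(1)=1) = P(D=1|Z=1) − P(D=1|Z=0). -/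
open Finset
open scoped Classical

lemma prb_split {Ω : Type*} [Fintype Ω] (p : Ω → ℝ) (Y0 Y1 : Ω → ℝ) (A : Ω → Prop) :
    prb p A = ∑ v ∈ Finset.image (fun ω => (Y0 ω, Y1 ω)) Finset.univ,
      prb p (fun ω => Y0 ω = v.1 ∧ Y1 ω = v.2 ∧ A ω) := by
  unfold prb
  rw [← Finset.sum_fiberwise_of_maps_to
    (fun ω _ => Finset.mem_image_of_mem (fun ω => (Y0 ω, Y1 ω)) (Finset.mem_univ ω))
    (fun ω => if A ω then p ω else 0)]
  refine Finset.sum_congr rfl fun v _ => ?_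
  rw [Finset.sum_filter]
  refine Finset.sum_congr rfl fun ω _ => ?_
  by_cases h1 : Y0 ω = v.1 <;> by_cases h2 : Y1 ω = v.2 <;> by_cases h3 : A ω <;>
    simp [Prod.ext_iff, h1, h2, h3]

/-- the proportion of compliers equals P(D=1|Z=1) − P(D=1|Z=0). -/
theorem stmt12 {Ω : Type*} [Fintype Ω]
    (p : Ω → ℝ) (hp : ∀ ω, 0 ≤ p ω) (hpsum : ∑ ω, p ω = 1)
    (Z D0 D1 D Y1 Y0 Y : Ω → ℝ)
    (hZbin : ∀ ω, Z ω = 0 ∨ Z ω = 1)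
    (hD0bin : ∀ ω, D0 ω = 0 ∨ D0 ω = 1) (hD1bin : ∀ ω, D1 ω = 0 ∨ D1 ω = 1)
    (hD : ∀ ω, D ω = Z ω * D1 ω + (1 - Z ω) * D0 ω)
    (hY : ∀ ω, Y ω = D ω * Y1 ω + (1 - D ω) * Y0 ω)
    (hZ1 : 0 < prb p (fun ω => Z ω = 1)) (hZ0 : 0 < prb p (fun ω => Z ω = 0))
    (hindep : ∀ (y0 y1 d0 d1 z : ℝ),
      prb p (fun ω => Y0 ω = y0 ∧ Y1 ω = y1 ∧ D0 ω = d0 ∧ D1 ω = d1 ∧ Z ω = z) =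
        prb p (fun ω => Y0 ω = y0 ∧ Y1 ω = y1 ∧ D0 ω = d0 ∧ D1 ω = d1) *
          prb p (fun ω => Z ω = z))
    (hmono : ∀ ω, 0 < p ω → D0 ω ≤ D1 ω)
    (hstrict : cpr p (fun ω => D ω = 1) (fun ω => Z ω = 0) <
      cpr p (fun ω => D ω = 1) (fun ω => Z ω = 1)) :
    prb p (fun ω => D0 ω = 0 ∧ D1 ω = 1) =
      cpr p (fun ω => D ω = 1) (fun ω => Z ω = 1) -
        cpr p (fun ω => D ω = 1) (fun ω => Z ω = 0) := by
  have hfac : ∀ d0 d1 z : ℝ, prb p (fun ω => D0 ω = d0 ∧ D1 ω = d1 ∧ Z ω = z) =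
      prb p (fun ω => D0 ω = d0 ∧ D1 ω = d1) * prb p (fun ω => Z ω = z) := by
    intro d0 d1 z
    rw [prb_split p Y0 Y1 (fun ω => D0 ω = d0 ∧ D1 ω = d1 ∧ Z ω = z),
        prb_split p Y0 Y1 (fun ω => D0 ω = d0 ∧ D1 ω = d1), Finset.sum_mul]
    exact Finset.sum_congr rfl fun v _ => hindep v.1 v.2 d0 d1 z
  have hzero : prb p (fun ω => D0 ω = 1 ∧ D1 ω = 0) = 0 := by
    apply Finset.sum_eq_zero
    intro ω _
    split_ifs with h
    · have hnp : ¬ 0 < p ω := fun hpos => by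
        have := hmono ω hpos
        rw [h.1, h.2] at this
        linarith
      linarith [hp ω]
    · rfl
  have hD1Z : ∀ z : ℝ, prb p (fun ω => D1 ω = 1 ∧ Z ω = z) =
      (prb p (fun ω => D0 ω = 0 ∧ D1 ω = 1) + prb p (fun ω => D0 ω = 1 ∧ D1 ω = 1)) *
        prb p (fun ω => Z ω = z) := by
    intro z
    rw [add_mul, ← hfac 0 1 z, ← hfac 1 1 z]
    unfold prb
    rw [← Finset.sum_add_distrib]
    refine Finset.sum_congr rfl fun ω _ => ?_
    rcases hD0bin ω with h | h <;> simp [h]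
  have hD0Z : ∀ z : ℝ, prb p (fun ω => D0 ω = 1 ∧ Z ω = z) =
      (prb p (fun ω => D0 ω = 1 ∧ D1 ω = 0) + prb p (fun ω => D0 ω = 1 ∧ D1 ω = 1)) *
        prb p (fun ω => Z ω = z) := by
    intro z
    rw [add_mul, ← hfac 1 0 z, ← hfac 1 1 z]
    unfold prb
    rw [← Finset.sum_add_distrib]
    refine Finset.sum_congr rfl fun ω _ => ?_
    rcases hD1bin ω with h | h <;> simp [h, and_comm]
  have hc1 : cpr p (fun ω => D ω = 1) (fun ω => Z ω = 1) =
      prb p (fun ω => D0 ω = 0 ∧ D1 ω = 1) + prb p (fun ω => D0 ω = 1 ∧ D1 ω = 1) := by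
    unfold cpr
    rw [prb_congr p (B := fun ω => D1 ω = 1 ∧ Z ω = 1)
      (fun ω => by
        have hz : Z ω = 1 → D ω = D1 ω := fun hz => by rw [hD ω, hz]; ring
        constructor
        · rintro ⟨h1, h2⟩; exact ⟨by rw [← hz h2]; exact h1, h2⟩
        · rintro ⟨h1, h2⟩; exact ⟨show _ = (1:ℝ) by rw [hz h2]; exact h1, h2⟩),
      hD1Z 1, mul_div_assoc, div_self (ne_of_gt hZ1), mul_one]
  have hc0 : cpr p (fun ω => D ω = 1) (fun ω => Z ω = 0) =
      prb p (fun ω => D0 ω = 1 ∧ D1 ω = 1) := by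
    unfold cpr
    rw [prb_congr p (B := fun ω => D0 ω = 1 ∧ Z ω = 0)
      (fun ω => by
        have hz : Z ω = 0 → D ω = D0 ω := fun hz => by rw [hD ω, hz]; ring
        constructor
        · rintro ⟨h1, h2⟩; exact ⟨by rw [← hz h2]; exact h1, h2⟩
        · rintro ⟨h1, h2⟩; exact ⟨show _ = (1:ℝ) by rw [hz h2]; exact h1, h2⟩),
      hD0Z 0, hzero, zero_add, mul_div_assoc, div_self (ne_of_gt hZ0), mul_one]
  rw [hc1, hc0]
  ring
end

section
/- In the deterministic compliance class framework with (Y(0), Y(1), D(0), D(1)) independent of Z, D(1) ≥ D(0) a.s., P(Z=1) ∈ (0,1), and P(D=1|Z=1) > P(D=1|Z=0), the Wald estimand identifies the LATE: (E[Y|Z=1] − E[Y|Z=0]) / (P(D=1|Z=1) − P(D=1|Z=0)) = E[Y(1) − Y(0) | D(0)=0, D(1)=1]. -/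
open Finset
open scoped Classical

lemma sum_fiber_s13 {Ω α : Type*} [Fintype Ω] (p : Ω → ℝ) (W : Ω → α) (g : α → ℝ) (B : Ω → Prop) :
    (∑ ω, if B ω then p ω * g (W ω) else 0)
      = ∑ t ∈ Finset.image W Finset.univ, g t * prb p (fun ω => W ω = t ∧ B ω) := by
  unfold prb
  simp_rw [Finset.mul_sum, mul_ite, mul_zero]
  rw [Finset.sum_comm]
  refine Finset.sum_congr rfl fun ω _ => ?_
  by_cases hB : B ω
  · simp only [hB, and_true, if_pos]
    rw [Finset.sum_eq_single (W ω)]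
    · simp [mul_comm]
    · intro t _ ht; rw [if_neg]; intro h; exact ht h.symm
    · intro h; exact absurd (Finset.mem_image_of_mem W (Finset.mem_univ ω)) h
  · simp [hB]

lemma indep_sum {Ω : Type*} [Fintype Ω] (p Y0 Y1 D0 D1 Z : Ω → ℝ)
    (hindep : ∀ (y0 y1 d0 d1 z : ℝ),
      prb p (fun ω => Y0 ω = y0 ∧ Y1 ω = y1 ∧ D0 ω = d0 ∧ D1 ω = d1 ∧ Z ω = z) =
        prb p (fun ω => Y0 ω = y0 ∧ Y1 ω = y1 ∧ D0 ω = d0 ∧ D1 ω = d1) *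
          prb p (fun ω => Z ω = z))
    (z : ℝ) (g : ℝ × ℝ × ℝ × ℝ → ℝ) :
    (∑ ω, if Z ω = z then p ω * g (Y0 ω, Y1 ω, D0 ω, D1 ω) else 0)
      = prb p (fun ω => Z ω = z) * exv p (fun ω => g (Y0 ω, Y1 ω, D0 ω, D1 ω)) := by
  set W : Ω → ℝ × ℝ × ℝ × ℝ := fun ω => (Y0 ω, Y1 ω, D0 ω, D1 ω) with hW
  have hiff : ∀ t : ℝ × ℝ × ℝ × ℝ, ∀ ω,
      W ω = t ↔ (Y0 ω = t.1 ∧ Y1 ω = t.2.1 ∧ D0 ω = t.2.2.1 ∧ D1 ω = t.2.2.2) := by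
    intro t ω; simp [hW, Prod.ext_iff]
  have key : ∀ t : ℝ × ℝ × ℝ × ℝ, prb p (fun ω => W ω = t ∧ Z ω = z)
      = prb p (fun ω => W ω = t) * prb p (fun ω => Z ω = z) := by
    intro t
    rw [prb_congr p (fun ω => by rw [hiff t ω, and_assoc, and_assoc, and_assoc]),
      prb_congr p (A := fun ω => W ω = t) (fun ω => hiff t ω)]
    exact hindep t.1 t.2.1 t.2.2.1 t.2.2.2 z
  have h2 := sum_fiber_s13 p W g (fun _ => True)
  simp only [and_true, if_true] at h2
  rw [sum_fiber_s13 p W g (fun ω => Z ω = z)]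
  simp_rw [key]
  unfold exv
  rw [h2, Finset.mul_sum]
  refine Finset.sum_congr rfl fun t _ => by ring

/-- in the deterministic compliance class framework the Wald estimand
identifies the LATE. -/
theorem stmt13 {Ω : Type*} [Fintype Ω]
    (p : Ω → ℝ) (hp : ∀ ω, 0 ≤ p ω) (hpsum : ∑ ω, p ω = 1)
    (Z D0 D1 D Y1 Y0 Y : Ω → ℝ)
    (hZbin : ∀ ω, Z ω = 0 ∨ Z ω = 1)
    (hD0bin : ∀ ω, D0 ω = 0 ∨ D0 ω = 1) (hD1bin : ∀ ω, D1 ω = 0 ∨ D1 ω = 1)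
    (hD : ∀ ω, D ω = Z ω * D1 ω + (1 - Z ω) * D0 ω)
    (hY : ∀ ω, Y ω = D ω * Y1 ω + (1 - D ω) * Y0 ω)
    (hZ1 : 0 < prb p (fun ω => Z ω = 1)) (hZ0 : 0 < prb p (fun ω => Z ω = 0))
    (hindep : ∀ (y0 y1 d0 d1 z : ℝ),
      prb p (fun ω => Y0 ω = y0 ∧ Y1 ω = y1 ∧ D0 ω = d0 ∧ D1 ω = d1 ∧ Z ω = z) =
        prb p (fun ω => Y0 ω = y0 ∧ Y1 ω = y1 ∧ D0 ω = d0 ∧ D1 ω = d1) *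
          prb p (fun ω => Z ω = z))
    (hmono : ∀ ω, 0 < p ω → D0 ω ≤ D1 ω)
    (hstrict : cpr p (fun ω => D ω = 1) (fun ω => Z ω = 0) <
      cpr p (fun ω => D ω = 1) (fun ω => Z ω = 1)) :
    (cex p Y (fun ω => Z ω = 1) - cex p Y (fun ω => Z ω = 0)) /
        (cpr p (fun ω => D ω = 1) (fun ω => Z ω = 1) -
          cpr p (fun ω => D ω = 1) (fun ω => Z ω = 0)) =
      cex p (fun ω => Y1 ω - Y0 ω) (fun ω => D0 ω = 0 ∧ D1 ω = 1) := by
  -- D equals D1 on {Z=1} and D0 on {Z=0}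
  have hDZ1 : ∀ ω, Z ω = 1 → D ω = D1 ω := fun ω h => by rw [hD ω, h]; ring
  have hDZ0 : ∀ ω, Z ω = 0 → D ω = D0 ω := fun ω h => by rw [hD ω, h]; ring
  -- conditional expectations of Y
  have e1 : cex p Y (fun ω => Z ω = 1)
      = exv p (fun ω => D1 ω * Y1 ω + (1 - D1 ω) * Y0 ω) := by
    unfold cex
    have h : (∑ ω, if Z ω = 1 then p ω * Y ω else 0)
        = ∑ ω, if Z ω = 1 then
            p ω * (fun t : ℝ × ℝ × ℝ × ℝ => t.2.2.2 * t.2.1 + (1 - t.2.2.2) * t.1)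
              (Y0 ω, Y1 ω, D0 ω, D1 ω) else 0 := by
      refine Finset.sum_congr rfl fun ω _ => ?_
      by_cases hz : Z ω = 1
      · simp only [hz, if_true, hY ω, hDZ1 ω hz]
      · simp [hz]
    rw [h, indep_sum p Y0 Y1 D0 D1 Z hindep 1
        (fun t : ℝ × ℝ × ℝ × ℝ => t.2.2.2 * t.2.1 + (1 - t.2.2.2) * t.1),
      mul_comm, mul_div_assoc, div_self hZ1.ne', mul_one]
  have e0 : cex p Y (fun ω => Z ω = 0)
      = exv p (fun ω => D0 ω * Y1 ω + (1 - D0 ω) * Y0 ω) := by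
    unfold cex
    have h : (∑ ω, if Z ω = 0 then p ω * Y ω else 0)
        = ∑ ω, if Z ω = 0 then
            p ω * (fun t : ℝ × ℝ × ℝ × ℝ => t.2.2.1 * t.2.1 + (1 - t.2.2.1) * t.1)
              (Y0 ω, Y1 ω, D0 ω, D1 ω) else 0 := by
      refine Finset.sum_congr rfl fun ω _ => ?_
      by_cases hz : Z ω = 0
      · simp only [hz, if_true, hY ω, hDZ0 ω hz]
      · simp [hz]
    rw [h, indep_sum p Y0 Y1 D0 D1 Z hindep 0
        (fun t : ℝ × ℝ × ℝ × ℝ => t.2.2.1 * t.2.1 + (1 - t.2.2.1) * t.1),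
      mul_comm, mul_div_assoc, div_self hZ0.ne', mul_one]
  -- conditional probabilities of D = 1
  have d1 : cpr p (fun ω => D ω = 1) (fun ω => Z ω = 1) = exv p D1 := by
    unfold cpr
    show prb p (fun ω => D ω = 1 ∧ Z ω = 1) / prb p (fun ω => Z ω = 1) = exv p D1
    have h : prb p (fun ω => D ω = 1 ∧ Z ω = 1)
        = ∑ ω, if Z ω = 1 then
            p ω * (fun t : ℝ × ℝ × ℝ × ℝ => t.2.2.2) (Y0 ω, Y1 ω, D0 ω, D1 ω) else 0 := by
      refine Finset.sum_congr rfl fun ω _ => ?_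
      by_cases hz : Z ω = 1
      · rcases hD1bin ω with h1 | h1 <;>
          simp [hz, hDZ1 ω hz, h1]
      · simp [hz]
    rw [h, indep_sum p Y0 Y1 D0 D1 Z hindep 1 (fun t : ℝ × ℝ × ℝ × ℝ => t.2.2.2),
      mul_comm, mul_div_assoc, div_self hZ1.ne', mul_one]
  have d0 : cpr p (fun ω => D ω = 1) (fun ω => Z ω = 0) = exv p D0 := by
    unfold cpr
    show prb p (fun ω => D ω = 1 ∧ Z ω = 0) / prb p (fun ω => Z ω = 0) = exv p D0
    have h : prb p (fun ω => D ω = 1 ∧ Z ω = 0)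
        = ∑ ω, if Z ω = 0 then
            p ω * (fun t : ℝ × ℝ × ℝ × ℝ => t.2.2.1) (Y0 ω, Y1 ω, D0 ω, D1 ω) else 0 := by
      refine Finset.sum_congr rfl fun ω _ => ?_
      by_cases hz : Z ω = 0
      · rcases hD0bin ω with h1 | h1 <;>
          simp [hz, hDZ0 ω hz, h1]
      · simp [hz]
    rw [h, indep_sum p Y0 Y1 D0 D1 Z hindep 0 (fun t : ℝ × ℝ × ℝ × ℝ => t.2.2.1),
      mul_comm, mul_div_assoc, div_self hZ0.ne', mul_one]
  -- numerator
  have num : exv p (fun ω => D1 ω * Y1 ω + (1 - D1 ω) * Y0 ω)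
      - exv p (fun ω => D0 ω * Y1 ω + (1 - D0 ω) * Y0 ω)
      = ∑ ω, if D0 ω = 0 ∧ D1 ω = 1 then p ω * (Y1 ω - Y0 ω) else 0 := by
    unfold exv
    rw [← Finset.sum_sub_distrib]
    refine Finset.sum_congr rfl fun ω _ => ?_
    rcases (hp ω).eq_or_lt with hpω | hpω
    · rw [← hpω]; simp
    · rcases hD0bin ω with h0 | h0 <;> rcases hD1bin ω with h1 | h1
      · simp [h0, h1]
      · simp [h0, h1]; ring
      · exfalso; have := hmono ω hpω; rw [h0, h1] at this; linarith
      · simp [h0, h1]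
  -- denominator
  have den : exv p D1 - exv p D0 = prb p (fun ω => D0 ω = 0 ∧ D1 ω = 1) := by
    unfold exv prb
    rw [← Finset.sum_sub_distrib]
    refine Finset.sum_congr rfl fun ω _ => ?_
    rcases (hp ω).eq_or_lt with hpω | hpω
    · rw [← hpω]; simp
    · rcases hD0bin ω with h0 | h0 <;> rcases hD1bin ω with h1 | h1
      · simp [h0, h1]
      · simp [h0, h1]
      · exfalso; have := hmono ω hpω; rw [h0, h1] at this; linarith
      · simp [h0, h1]
  rw [e1, e0, d1, d0, num, den]
  unfold cex
  congr 1
  exact Finset.sum_congr rfl fun ω _ => by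
    by_cases h : D0 ω = 0 ∧ D1 ω = 1 <;> simp [h]
end

section
/- Let U take values in a finite set with P(U=u)>0, let w : supp(U) → [−1,1] and τ : supp(U) → ℝ with |τ(u) − τ(u')| ≤ r for all u, u'. Suppose E[w(U)] > 0. Then for the Wald-type quantity W = E[τ(U)w(U)]/E[w(U)] and any fixed u₀, |W − τ(u₀)| ≤ r · E[|w(U)|]/E[w(U)]. In particular if w ≥ 0 everywhere then |W − τ(u₀)| ≤ r. -/
open Finset
open scoped Classical

/-! With the signed weights `a u = w u * q u`, the difference `W - τ u₀` is the `a`-weighted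
average of `τ u - τ u₀`; each term is at most `r * |a u|` in absolute value, and when the
weights are nonnegative `∑ |a u| = ∑ a u`. -/

section WeightedAverage

variable {ι : Type*} (s : Finset ι) (a x : ι → ℝ)

lemma weightedAvg_sub_const (c : ℝ) (ha : ∑ u ∈ s, a u ≠ 0) :
    (∑ u ∈ s, x u * a u) / (∑ u ∈ s, a u) - c =
      (∑ u ∈ s, (x u - c) * a u) / ∑ u ∈ s, a u := by
  rw [div_sub' ha]
  simp only [sub_mul, sum_sub_distrib, sum_mul, mul_comm c]

lemma abs_sum_mul_le_of_abs_le {r : ℝ} (hx : ∀ u ∈ s, |x u| ≤ r) :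
    |∑ u ∈ s, x u * a u| ≤ r * ∑ u ∈ s, |a u| :=
  calc |∑ u ∈ s, x u * a u| ≤ ∑ u ∈ s, |x u| * |a u| := by
        simpa only [abs_mul] using abs_sum_le_sum_abs (fun u => x u * a u) s
    _ ≤ ∑ u ∈ s, r * |a u| := by gcongr with u hu; exact hx u hu
    _ = r * ∑ u ∈ s, |a u| := (mul_sum s _ r).symm

lemma abs_weightedAvg_sub_le {c r : ℝ} (ha : 0 < ∑ u ∈ s, a u) (hx : ∀ u ∈ s, |x u - c| ≤ r) :
    |(∑ u ∈ s, x u * a u) / (∑ u ∈ s, a u) - c| ≤ r * (∑ u ∈ s, |a u|) / ∑ u ∈ s, a u := by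
  rw [weightedAvg_sub_const s a x c ha.ne', abs_div, abs_of_pos ha]
  exact div_le_div_of_nonneg_right (abs_sum_mul_le_of_abs_le s a _ hx) ha.le

lemma abs_weightedAvg_sub_le_of_nonneg {c r : ℝ} (ha₀ : ∀ u ∈ s, 0 ≤ a u)
    (ha : 0 < ∑ u ∈ s, a u) (hx : ∀ u ∈ s, |x u - c| ≤ r) :
    |(∑ u ∈ s, x u * a u) / (∑ u ∈ s, a u) - c| ≤ r := by
  have habs : ∑ u ∈ s, |a u| = ∑ u ∈ s, a u := sum_congr rfl fun u hu => abs_of_nonneg (ha₀ u hu)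
  simpa only [habs, mul_div_assoc, div_self ha.ne', mul_one] using abs_weightedAvg_sub_le s a x ha hx

end WeightedAverage

theorem stmt18_general {ι : Type*} [Fintype ι]
    (q w τ : ι → ℝ)
    (hq : ∀ u, 0 < q u)
    (r : ℝ)
    (hrange : ∀ u u', |τ u - τ u'| ≤ r)
    (hEw : 0 < ∑ u, w u * q u)
    (u₀ : ι) :
    |(∑ u, τ u * w u * q u) / (∑ u, w u * q u) - τ u₀| ≤
        r * (∑ u, |w u| * q u) / (∑ u, w u * q u) ∧
      ((∀ u, 0 ≤ w u) →
        |(∑ u, τ u * w u * q u) / (∑ u, w u * q u) - τ u₀| ≤ r) := by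
  have hτ : ∀ u ∈ univ, |τ u - τ u₀| ≤ r := fun u _ => hrange u u₀
  have habs : ∀ u, |w u * q u| = |w u| * q u := fun u => by rw [abs_mul, abs_of_pos (hq u)]
  simp only [mul_assoc, ← habs]
  exact ⟨abs_weightedAvg_sub_le univ _ τ hEw hτ, fun hw =>
    abs_weightedAvg_sub_le_of_nonneg univ _ τ (fun u _ => mul_nonneg (hw u) (hq u).le) hEw hτ⟩

/-- deviation of the Wald-type weighted average from any stratum effect
is bounded by r·E[|w|]/E[w]; under monotonicity this is at most r. -/
theorem stmt18 {ι : Type*} [Fintype ι]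
    (q w τ : ι → ℝ)
    (hq : ∀ u, 0 < q u) (hqsum : ∑ u, q u = 1)
    (hwb : ∀ u, -1 ≤ w u ∧ w u ≤ 1)
    (r : ℝ) (hr : 0 ≤ r)
    (hrange : ∀ u u', |τ u - τ u'| ≤ r)
    (hEw : 0 < ∑ u, w u * q u)
    (u₀ : ι) :
    |(∑ u, τ u * w u * q u) / (∑ u, w u * q u) - τ u₀| ≤
        r * (∑ u, |w u| * q u) / (∑ u, w u * q u) ∧
      ((∀ u, 0 ≤ w u) →
        |(∑ u, τ u * w u * q u) / (∑ u, w u * q u) - τ u₀| ≤ r) :=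
  stmt18_general q w τ hq r hrange hEw u₀
end
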